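/- Let u_T ∈ L²(Ω) and define the loss ℓ(u) = (1/2)‖u − u_T‖²_{L²(Ω)}. For each w ∈ U_ad let u(w) ∈ V_c be the unique solution of μ(u,ψ)_{V^w} + λ ∫_Ω (u − f)ψ dx = 0 for all ψ ∈ V_c. Suppose w ∈ U_ad minimizes w ↦ ℓ(u(w)) over U_ad, set u = u(w), and let p ∈ V_c be the unique solution of the adjoint equation μ(p,φ)_{V^w} + λ ∫_Ω p φ dx = −∫_Ω (u − u_T) φ dx for all φ ∈ V_c. Then the first-order variational inequality μ ∫_{Ω̂}∫_{Ω̂} (u(x) − u(y))(p(x) − p(y)) γ̃_{(h − w)}(x,y) dy dx ≥ 0 holds for all h ∈ U_ad. -/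

import Mathlib

/-!
Perturb the optimal weight along the segment `w_t = w + t (h - w) ∈ U_ad`. Because
`γ_{w_t} = γ_w · exp (-t J_{h-w})`, where `J_q(x,y) = ∫ q(τ) (f(x+τ) - f(y+τ))² dτ` is bounded,
the kernels satisfy `γ_{w_t} - γ_w = O(t)` and `γ_{w_t} - γ_w - t γ̃_{h-w} = O(t²)` uniformly.
Coercivity of `γ_{w_t}` makes the state Lipschitz, `‖u_t - u‖ = O(t)`. Testing both state
equations and the adjoint equation with `p` and `u_t - u` gives
`∫_Ω (u - u_T)(u_t - u) = μ (u_t, p)_{γ_{w_t} - γ_w}`, so optimality of `w` yields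
`0 ≤ ‖u_t - u‖² + 2μ (u_t, p)_{γ_{w_t} - γ_w} = 2tμ (u, p)_{Ṽ_{h-w}} + O(t²)`.
Dividing by `t` and letting `t → 0⁺` gives the inequality.
-/

open MeasureTheory Filter

noncomputable section

/-- Points of `ℝ^d`, with the sup norm. -/
abbrev Rd (d : ℕ) : Type := Fin d → ℝ

/-- The interaction domain `Ω_I` of `Ω` with interaction radius `ε`. -/
def interDom {d : ℕ} (Ω : Set (Rd d)) (ε : ℝ) : Set (Rd d) :=
  {y | y ∉ Ω ∧ ∃ x ∈ Ω, ‖y - x‖ ≤ ε}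

/-- The admissible set of weights `U_ad = {w ∈ L²(B_ρ(0)) : 0 ≤ w ≤ W a.e.}`. -/
def Uad {d : ℕ} (ρ Wb : ℝ) : Set (Rd d → ℝ) :=
  {w | MemLp w 2 (volume.restrict (Metric.closedBall (0 : Rd d) ρ)) ∧
    ∀ᵐ τ ∂volume.restrict (Metric.closedBall (0 : Rd d) ρ), 0 ≤ w τ ∧ w τ ≤ Wb}

/-- The modified nonlocal means kernel `γ_w`. -/
def kernelW {d : ℕ} (ρ ε : ℝ) (f w : Rd d → ℝ) (x y : Rd d) : ℝ :=
  if ‖x - y‖ ≤ ε then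
    Real.exp (-∫ τ in Metric.closedBall (0 : Rd d) ρ, w τ * (f (x + τ) - f (y + τ)) ^ 2)
  else 0

/-- The linearized kernel `γ̃_h` at base weight `w` in direction `h`. -/
def kernelLin {d : ℕ} (ρ ε : ℝ) (f w h : Rd d → ℝ) (x y : Rd d) : ℝ :=
  if ‖x - y‖ ≤ ε then
    -kernelW ρ ε f w x y *
      ∫ τ in Metric.closedBall (0 : Rd d) ρ, h τ * (f (x + τ) - f (y + τ)) ^ 2
  else 0

/-- The nonlocal bilinear form `(u,v)` over `A` with kernel `γ`. -/
def innerV {d : ℕ} (A : Set (Rd d)) (γ : Rd d → Rd d → ℝ) (u v : Rd d → ℝ) : ℝ :=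
  ∫ x in A, ∫ y in A, (u x - u y) * (v x - v y) * γ x y

/-- The constrained space `V_c`: square integrable on `A = Ω̂`, vanishing a.e. on `I = Ω_I`. -/
def Vc {d : ℕ} (A I : Set (Rd d)) : Set (Rd d → ℝ) :=
  {v | MemLp v 2 (volume.restrict A) ∧ ∀ᵐ x ∂volume.restrict I, v x = 0}

/-- The `L²(s)` norm. -/
def L2norm {d : ℕ} (s : Set (Rd d)) (v : Rd d → ℝ) : ℝ :=
  (eLpNorm v 2 (volume.restrict s)).toReal

open Topology
open scoped ENNReal

lemma nonneg_of_forall_zero_le_mul_add_sq_mul {X E t₀ : ℝ} (ht₀ : 0 < t₀)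
    (h : ∀ t ∈ Set.Ioc 0 t₀, 0 ≤ t * X + t ^ 2 * E) : 0 ≤ X := by
  have hlim : Tendsto (fun t => X + t * E) (𝓝[>] 0) (𝓝 X) := by
    simpa using ((tendsto_id.mul_const E).const_add X).mono_left (nhdsWithin_le_nhds (a := 0))
  refine ge_of_tendsto hlim ?_
  filter_upwards [Ioc_mem_nhdsGT ht₀] with t ht
  have := h t ht
  exact le_of_mul_le_mul_left (by nlinarith : t * 0 ≤ t * (X + t * E)) ht.1

section MeasureSpace

variable {α : Type*} [MeasurableSpace α] {μ : Measure α} {f g u u' ψ : α → ℝ}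

lemma exists_measurable_mem_Icc_ae_eq {a b : ℝ} (hab : a ≤ b) (hg : AEStronglyMeasurable g μ)
    (hgab : ∀ᵐ x ∂μ, g x ∈ Set.Icc a b) :
    ∃ g' : α → ℝ, Measurable g' ∧ (∀ x, g' x ∈ Set.Icc a b) ∧ g =ᵐ[μ] g' :=
  ⟨fun x => Set.projIcc a b hab (hg.mk g x),
    measurable_subtype_coe.comp (continuous_projIcc.measurable.comp
      hg.stronglyMeasurable_mk.measurable),
    fun x => (Set.projIcc a b hab _).2,
    by filter_upwards [hg.ae_eq_mk, hgab] with x h₁ h₂; rw [← h₁, Set.projIcc_of_mem hab h₂]⟩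

lemma MemLp.mono_set {p : ℝ≥0∞} {s t : Set α} (hst : s ⊆ t) (hg : MemLp g p (μ.restrict t)) :
    MemLp g p (μ.restrict s) :=
  hg.mono_measure (Measure.restrict_mono_set μ hst)

lemma integral_abs_mul_abs_le (hf : MemLp f 2 μ) (hg : MemLp g 2 μ) :
    ∫ a, |f a| * |g a| ∂μ ≤ √(∫ a, f a ^ 2 ∂μ) * √(∫ a, g a ^ 2 ∂μ) := by
  have key := integral_mul_le_Lp_mul_Lq_of_nonneg Real.HolderConjugate.two_two
    (ae_of_all μ fun a => abs_nonneg (f a)) (ae_of_all μ fun a => abs_nonneg (g a))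
    (by rw [ENNReal.ofReal_ofNat]; exact hf.abs) (by rw [ENNReal.ofReal_ofNat]; exact hg.abs)
  simp only [Real.rpow_two, ← Real.sqrt_eq_rpow] at key
  simpa only [sq_abs] using key

lemma integral_sub_mul_eq_add (hu : MemLp u 2 μ) (hu' : MemLp u' 2 μ) (hf : MemLp f 2 μ)
    (hψ : MemLp ψ 2 μ) :
    ∫ x, (u' x - f x) * ψ x ∂μ = ∫ x, (u x - f x) * ψ x ∂μ + ∫ x, (u' - u) x * ψ x ∂μ := by
  rw [← integral_add (f := fun x => (u x - f x) * ψ x) (g := fun x => (u' - u) x * ψ x)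
    ((hu.sub hf).integrable_mul hψ) ((hu'.sub hu).integrable_mul hψ)]
  exact integral_congr_ae (ae_of_all _ fun x => by simp only [Pi.sub_apply]; ring)

end MeasureSpace

section L2norm

variable {d : ℕ} {s : Set (Rd d)} {u v : Rd d → ℝ}

lemma L2norm_nonneg : 0 ≤ L2norm s v := ENNReal.toReal_nonneg

lemma L2norm_sq (hv : MemLp v 2 (volume.restrict s)) : L2norm s v ^ 2 = ∫ x in s, v x ^ 2 := by
  rw [L2norm, hv.eLpNorm_eq_integral_rpow_norm two_ne_zero ENNReal.ofNat_ne_top,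
    ENNReal.toReal_ofReal (by positivity), ← Real.rpow_natCast, ← Real.rpow_mul (by positivity)]
  simp

lemma L2norm_add_sq (hu : MemLp u 2 (volume.restrict s)) (hv : MemLp v 2 (volume.restrict s)) :
    L2norm s (u + v) ^ 2 = L2norm s u ^ 2 + 2 * (∫ x in s, u x * v x) + L2norm s v ^ 2 := by
  have huv : Integrable (fun x => u x * v x) (volume.restrict s) := hu.integrable_mul hv
  rw [L2norm_sq (hu.add hv), L2norm_sq hu, L2norm_sq hv, ← integral_const_mul,
    ← integral_add hu.integrable_sq (huv.const_mul 2), ← integral_add _ hv.integrable_sq]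
  · exact integral_congr_ae (ae_of_all _ fun x => by simp only [Pi.add_apply]; ring)
  · exact hu.integrable_sq.add (huv.const_mul 2)

lemma L2norm_mono_set {t : Set (Rd d)} (hst : s ⊆ t) (hv : MemLp v 2 (volume.restrict t)) :
    L2norm s v ≤ L2norm t v :=
  ENNReal.toReal_mono hv.eLpNorm_ne_top (eLpNorm_mono_measure _ (Measure.restrict_mono_set _ hst))

end L2norm

lemma convex_Uad {d : ℕ} (ρ Wb : ℝ) : Convex ℝ (Uad (d := d) ρ Wb) := by
  intro w hw h hh a b ha hb hab
  refine ⟨(hw.1.const_smul a).add (hh.1.const_smul b), ?_⟩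
  filter_upwards [hw.2, hh.2] with τ h₁ h₂
  simp only [Pi.add_apply, Pi.smul_apply, smul_eq_mul]
  constructor <;> nlinarith [h₁.1, h₁.2, h₂.1, h₂.2]

lemma isBounded_interDom {d : ℕ} {Ω : Set (Rd d)} (hΩ : Bornology.IsBounded Ω) (ε : ℝ) :
    Bornology.IsBounded (interDom Ω ε) :=
  hΩ.cthickening.subset fun y ⟨_, x, hx, hxy⟩ =>
    Metric.mem_cthickening_of_dist_le y x ε Ω hx (by rwa [dist_eq_norm])

section InnerV

variable {d : ℕ} {A : Set (Rd d)} {κ κ₁ κ₂ : Rd d → Rd d → ℝ} {u u₁ u₂ v : Rd d → ℝ}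
  {c c₁ c₂ : ℝ}

def IsBoundedKernel (κ : Rd d → Rd d → ℝ) (c : ℝ) : Prop :=
  Measurable (Function.uncurry κ) ∧ ∀ x y, |κ x y| ≤ c

lemma IsBoundedKernel.add (h₁ : IsBoundedKernel κ₁ c₁) (h₂ : IsBoundedKernel κ₂ c₂) :
    IsBoundedKernel (κ₁ + κ₂) (c₁ + c₂) :=
  ⟨h₁.1.add h₂.1, fun x y => (abs_add_le _ _).trans (add_le_add (h₁.2 x y) (h₂.2 x y))⟩

lemma IsBoundedKernel.sub (h₁ : IsBoundedKernel κ₁ c₁) (h₂ : IsBoundedKernel κ₂ c₂) :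
    IsBoundedKernel (κ₁ - κ₂) (c₁ + c₂) :=
  ⟨h₁.1.sub h₂.1, fun x y => (abs_sub _ _).trans (add_le_add (h₁.2 x y) (h₂.2 x y))⟩

lemma IsBoundedKernel.nonneg (h : IsBoundedKernel κ c) : 0 ≤ c :=
  (abs_nonneg _).trans (h.2 0 0)

lemma innerV_comm : innerV A κ u v = innerV A κ v u := by
  simp only [innerV, mul_comm (u _ - u _)]

lemma innerV_smul_kernel (t : ℝ) : innerV A (t • κ) u v = t * innerV A κ u v := by
  simp only [innerV, ← integral_const_mul]
  refine integral_congr_ae (ae_of_all _ fun x => integral_congr_ae (ae_of_all _ fun y => ?_))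
  simp only [Pi.smul_apply, smul_eq_mul]
  ring

variable [IsFiniteMeasure (volume.restrict A)]

local notation "ν" => volume.restrict A

lemma integrable_innerV_integrand (hu : MemLp u 2 ν) (hv : MemLp v 2 ν)
    (hκ : IsBoundedKernel κ c) :
    Integrable (fun q : Rd d × Rd d => (u q.1 - u q.2) * (v q.1 - v q.2) * κ q.1 q.2)
      (Measure.prod ν ν) :=
  (((hu.comp_fst ν).sub (hu.comp_snd ν)).integrable_mul
    ((hv.comp_fst ν).sub (hv.comp_snd ν))).mul_bdd hκ.1.aestronglyMeasurable
    (ae_of_all _ fun q => hκ.2 q.1 q.2)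

lemma innerV_eq_integral_prod (hu : MemLp u 2 ν) (hv : MemLp v 2 ν)
    (hκ : IsBoundedKernel κ c) :
    innerV A κ u v = ∫ q, (u q.1 - u q.2) * (v q.1 - v q.2) * κ q.1 q.2 ∂(Measure.prod ν ν) :=
  (integral_prod _ (integrable_innerV_integrand hu hv hκ)).symm

lemma innerV_add_left (hu₁ : MemLp u₁ 2 ν) (hu₂ : MemLp u₂ 2 ν) (hv : MemLp v 2 ν)
    (hκ : IsBoundedKernel κ c) :
    innerV A κ (u₁ + u₂) v = innerV A κ u₁ v + innerV A κ u₂ v := by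
  rw [innerV_eq_integral_prod (hu₁.add hu₂) hv hκ, innerV_eq_integral_prod hu₁ hv hκ,
    innerV_eq_integral_prod hu₂ hv hκ, ← integral_add (integrable_innerV_integrand hu₁ hv hκ)
      (integrable_innerV_integrand hu₂ hv hκ)]
  congr! 2 with q
  simp only [Pi.add_apply]
  ring

lemma innerV_add_kernel (hu : MemLp u 2 ν) (hv : MemLp v 2 ν) (hκ₁ : IsBoundedKernel κ₁ c₁)
    (hκ₂ : IsBoundedKernel κ₂ c₂) :
    innerV A (κ₁ + κ₂) u v = innerV A κ₁ u v + innerV A κ₂ u v := by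
  rw [innerV_eq_integral_prod hu hv (hκ₁.add hκ₂), innerV_eq_integral_prod hu hv hκ₁,
    innerV_eq_integral_prod hu hv hκ₂, ← integral_add (integrable_innerV_integrand hu hv hκ₁)
      (integrable_innerV_integrand hu hv hκ₂)]
  congr! 2 with q
  simp only [Pi.add_apply]
  ring

lemma integral_sq_sub_prod_le (hu : MemLp u 2 ν) :
    ∫ q, (u q.1 - u q.2) ^ 2 ∂(Measure.prod ν ν) ≤ 4 * volume.real A * L2norm A u ^ 2 := by
  have hsq := hu.integrable_sq
  calc ∫ q, (u q.1 - u q.2) ^ 2 ∂(Measure.prod ν ν)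
      ≤ ∫ q, (2 * u q.1 ^ 2 + 2 * u q.2 ^ 2) ∂(Measure.prod ν ν) := by
        refine integral_mono ((hu.comp_fst ν).sub (hu.comp_snd ν)).integrable_sq
          (((hsq.comp_fst ν).const_mul 2).add ((hsq.comp_snd ν).const_mul 2)) fun q => ?_
        nlinarith [sq_nonneg (u q.1 + u q.2)]
    _ = 4 * volume.real A * L2norm A u ^ 2 := by
        rw [integral_add ((hsq.comp_fst ν).const_mul 2) ((hsq.comp_snd ν).const_mul 2),
          integral_const_mul, integral_const_mul, integral_fun_fst (fun x => u x ^ 2),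
          integral_fun_snd (fun x => u x ^ 2), L2norm_sq hu, measureReal_restrict_apply_univ,
          smul_eq_mul]
        ring

lemma abs_innerV_le (hu : MemLp u 2 ν) (hv : MemLp v 2 ν) (hκ : IsBoundedKernel κ c) :
    |innerV A κ u v| ≤ 4 * c * volume.real A * (L2norm A u * L2norm A v) := by
  have hU := (hu.comp_fst ν).sub (hu.comp_snd ν)
  have hV := (hv.comp_fst ν).sub (hv.comp_snd ν)
  rw [innerV_eq_integral_prod hu hv hκ]
  calc |∫ q, (u q.1 - u q.2) * (v q.1 - v q.2) * κ q.1 q.2 ∂(Measure.prod ν ν)|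
      ≤ ∫ q, c * (|u q.1 - u q.2| * |v q.1 - v q.2|) ∂(Measure.prod ν ν) := by
        refine (abs_integral_le_integral_abs).trans (integral_mono_of_nonneg
          (ae_of_all _ fun q => abs_nonneg _) (by simpa only [Pi.mul_apply, Pi.sub_apply, abs_mul]
            using (hU.integrable_mul hV).abs.const_mul c) (ae_of_all _ fun q => ?_))
        simp only [abs_mul, mul_comm c]
        exact mul_le_mul_of_nonneg_left (hκ.2 _ _) (by positivity)
    _ ≤ c * (√(4 * volume.real A * L2norm A u ^ 2) * √(4 * volume.real A * L2norm A v ^ 2)) := by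
        rw [integral_const_mul]
        refine mul_le_mul_of_nonneg_left ((integral_abs_mul_abs_le hU hV).trans ?_) hκ.nonneg
        exact mul_le_mul (Real.sqrt_le_sqrt (integral_sq_sub_prod_le hu))
          (Real.sqrt_le_sqrt (integral_sq_sub_prod_le hv)) (Real.sqrt_nonneg _) (Real.sqrt_nonneg _)
    _ = 4 * c * volume.real A * (L2norm A u * L2norm A v) := by
        have h0 : 0 ≤ 4 * volume.real A * (L2norm A u * L2norm A v) :=
          mul_nonneg (by positivity) (mul_nonneg L2norm_nonneg L2norm_nonneg)
        rw [← Real.sqrt_mul (by positivity),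
          show 4 * volume.real A * L2norm A u ^ 2 * (4 * volume.real A * L2norm A v ^ 2) =
            (4 * volume.real A * (L2norm A u * L2norm A v)) ^ 2 by ring, Real.sqrt_sq h0]
        ring

end InnerV

section Kernel

open Metric

variable {d : ℕ} {ρ ε M a t C : ℝ} {f f' w w' q : Rd d → ℝ} {x y : Rd d}

def patchDist (ρ : ℝ) (f w : Rd d → ℝ) (x y : Rd d) : ℝ :=
  ∫ τ in closedBall (0 : Rd d) ρ, w τ * (f (x + τ) - f (y + τ)) ^ 2

lemma kernelW_eq_ite :
    kernelW ρ ε f w x y = if ‖x - y‖ ≤ ε then Real.exp (-patchDist ρ f w x y) else 0 := rfl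

lemma kernelLin_eq : kernelLin ρ ε f w q x y = -kernelW ρ ε f w x y * patchDist ρ f q x y := by
  by_cases hxy : ‖x - y‖ ≤ ε
  · simp only [kernelLin, if_pos hxy, patchDist]
  · simp only [kernelLin, kernelW, if_neg hxy, neg_zero, zero_mul]

lemma patchDist_congr (hf : f =ᵐ[volume] f') (hw : w =ᵐ[volume.restrict (closedBall 0 ρ)] w') :
    patchDist ρ f w = patchDist ρ f' w' := by
  have htrans : ∀ x : Rd d, (fun τ => f (x + τ)) =ᵐ[volume] fun τ => f' (x + τ) := fun x =>
    (measurePreserving_add_left volume x).quasiMeasurePreserving.ae_eq_comp hf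
  ext x y
  refine integral_congr_ae ?_
  filter_upwards [hw, ae_restrict_of_ae (htrans x), ae_restrict_of_ae (htrans y)] with τ h₁ h₂ h₃
  rw [h₁, h₂, h₃]

lemma patchDist_nonneg (hw : ∀ᵐ τ ∂volume.restrict (closedBall 0 ρ), 0 ≤ w τ) :
    0 ≤ patchDist ρ f w x y :=
  integral_nonneg_of_ae (by filter_upwards [hw] with τ hτ using mul_nonneg hτ (sq_nonneg _))

lemma abs_kernelW_le_one (hw : ∀ᵐ τ ∂volume.restrict (closedBall 0 ρ), 0 ≤ w τ) :
    |kernelW ρ ε f w x y| ≤ 1 := by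
  rw [kernelW_eq_ite]
  split_ifs
  · rw [abs_of_pos (Real.exp_pos _), Real.exp_le_one_iff, neg_nonpos]
    exact patchDist_nonneg hw
  · simp

lemma measurable_patchDist (hf : Measurable f) (hw : Measurable w) :
    Measurable (Function.uncurry (patchDist ρ f w)) := by
  have hF : StronglyMeasurable fun z : (Rd d × Rd d) × Rd d =>
      w z.2 * (f (z.1.1 + z.2) - f (z.1.2 + z.2)) ^ 2 :=
    ((hw.comp measurable_snd).mul (((hf.comp (measurable_fst.fst.add measurable_snd)).sub
      (hf.comp (measurable_fst.snd.add measurable_snd))).pow_const 2)).stronglyMeasurable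
  exact hF.integral_prod_right'.measurable

lemma measurable_kernelW (hf : Measurable f) (hw : Measurable w) :
    Measurable (Function.uncurry (kernelW ρ ε f w)) :=
  Measurable.ite (measurableSet_le (measurable_fst.sub measurable_snd).norm measurable_const)
    (measurable_patchDist hf hw).neg.exp measurable_const

lemma measurable_kernelLin (hf : Measurable f) (hw : Measurable w) (hq : Measurable q) :
    Measurable (Function.uncurry (kernelLin ρ ε f w q)) := by
  have h : Function.uncurry (kernelLin ρ ε f w q) =
      fun z => -Function.uncurry (kernelW ρ ε f w) z * Function.uncurry (patchDist ρ f q) z := by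
    ext z
    exact kernelLin_eq
  rw [h]
  exact (measurable_kernelW hf hw).neg.mul (measurable_patchDist hf hq)

lemma abs_patchDist_integrand_le (hf : ∀ z, |f z| ≤ M) (hw : ∀ τ, |w τ| ≤ a) (τ : Rd d) :
    |w τ * (f (x + τ) - f (y + τ)) ^ 2| ≤ a * (2 * M) ^ 2 := by
  have hdiff : |f (x + τ) - f (y + τ)| ≤ 2 * M := by
    linarith [abs_sub (f (x + τ)) (f (y + τ)), hf (x + τ), hf (y + τ)]
  rw [abs_mul, abs_pow]
  exact mul_le_mul (hw τ) (pow_le_pow_left₀ (abs_nonneg _) hdiff 2) (by positivity)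
    ((abs_nonneg _).trans (hw τ))

lemma abs_patchDist_le (hf : ∀ z, |f z| ≤ M) (hw : ∀ τ, |w τ| ≤ a) :
    |patchDist ρ f w x y| ≤ a * (2 * M) ^ 2 * volume.real (closedBall (0 : Rd d) ρ) :=
  (Real.norm_eq_abs _).symm.trans_le <| norm_setIntegral_le_of_norm_le_const
    (measure_closedBall_lt_top (μ := volume)) fun τ _ => abs_patchDist_integrand_le hf hw τ

lemma integrable_patchDist_integrand (hf : Measurable f) (hfM : ∀ z, |f z| ≤ M)
    (hw : Measurable w) (hwa : ∀ τ, |w τ| ≤ a) :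
    Integrable (fun τ => w τ * (f (x + τ) - f (y + τ)) ^ 2)
      (volume.restrict (closedBall (0 : Rd d) ρ)) :=
  have : IsFiniteMeasure (volume.restrict (closedBall (0 : Rd d) ρ)) :=
    isFiniteMeasure_restrict.mpr measure_closedBall_lt_top.ne
  Integrable.of_bound ((hw.mul (((hf.comp (measurable_const_add x)).sub
      (hf.comp (measurable_const_add y))).pow_const 2)).aestronglyMeasurable)
    (a * (2 * M) ^ 2) (ae_of_all _ (abs_patchDist_integrand_le hfM hwa))

lemma patchDist_add_mul (hf : Measurable f) (hfM : ∀ z, |f z| ≤ M) (hw : Measurable w)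
    (hwa : ∀ τ, |w τ| ≤ a) (hq : Measurable q) (hqa : ∀ τ, |q τ| ≤ a) :
    patchDist ρ f (fun τ => w τ + t * q τ) x y = patchDist ρ f w x y + t * patchDist ρ f q x y := by
  rw [patchDist, patchDist, patchDist, ← integral_const_mul, ← integral_add
    (integrable_patchDist_integrand hf hfM hw hwa)
    ((integrable_patchDist_integrand hf hfM hq hqa).const_mul t)]
  exact integral_congr_ae (ae_of_all _ fun τ => by ring)

lemma kernelW_add_mul (hf : Measurable f) (hfM : ∀ z, |f z| ≤ M) (hw : Measurable w)
    (hwa : ∀ τ, |w τ| ≤ a) (hq : Measurable q) (hqa : ∀ τ, |q τ| ≤ a) :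
    kernelW ρ ε f (fun τ => w τ + t * q τ) x y =
      kernelW ρ ε f w x y * Real.exp (-(t * patchDist ρ f q x y)) := by
  simp only [kernelW_eq_ite, patchDist_add_mul hf hfM hw hwa hq hqa, neg_add, Real.exp_add]
  split_ifs <;> simp

lemma isBoundedKernel_kernelW_add_mul_sub (hf : Measurable f) (hfM : ∀ z, |f z| ≤ M)
    (hw : Measurable w) (hw0 : ∀ τ, 0 ≤ w τ) (hwa : ∀ τ, |w τ| ≤ a) (hq : Measurable q)
    (hqa : ∀ τ, |q τ| ≤ a) (hC : ∀ x y, |patchDist ρ f q x y| ≤ C) (ht : 0 ≤ t)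
    (htC : t * C ≤ 1) :
    IsBoundedKernel (kernelW ρ ε f (fun τ => w τ + t * q τ) - kernelW ρ ε f w) (2 * C * t) ∧
      IsBoundedKernel (kernelW ρ ε f (fun τ => w τ + t * q τ) - kernelW ρ ε f w -
        t • kernelLin ρ ε f w q) (C ^ 2 * t ^ 2) := by
  have hκ' := measurable_kernelW (ρ := ρ) (ε := ε) hf (hw.add (hq.const_mul t))
  have hκ := measurable_kernelW (ρ := ρ) (ε := ε) hf hw
  have hs : ∀ x y, |-(t * patchDist ρ f q x y)| ≤ t * C := fun x y => by
    rw [abs_neg, abs_mul, abs_of_nonneg ht]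
    exact mul_le_mul_of_nonneg_left (hC x y) ht
  have hκ1 : ∀ x y, |kernelW ρ ε f w x y| ≤ 1 := fun x y =>
    abs_kernelW_le_one (ae_of_all _ hw0)
  refine ⟨⟨hκ'.sub hκ, fun x y => ?_⟩, ⟨(hκ'.sub hκ).sub
    ((measurable_kernelLin hf hw hq).const_mul t), fun x y => ?_⟩⟩
  · have h := Real.abs_exp_sub_one_le ((hs x y).trans htC)
    calc |(kernelW ρ ε f (fun τ => w τ + t * q τ) - kernelW ρ ε f w) x y|
        = |kernelW ρ ε f w x y| * |Real.exp (-(t * patchDist ρ f q x y)) - 1| := by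
          simp only [Pi.sub_apply]
          rw [kernelW_add_mul hf hfM hw hwa hq hqa, ← abs_mul, mul_sub, mul_one]
      _ ≤ 1 * (2 * (t * C)) := mul_le_mul (hκ1 x y) (h.trans (by linarith [hs x y]))
          (abs_nonneg _) zero_le_one
      _ = 2 * C * t := by ring
  · have h := Real.abs_exp_sub_one_sub_id_le ((hs x y).trans htC)
    calc |(kernelW ρ ε f (fun τ => w τ + t * q τ) - kernelW ρ ε f w -
          t • kernelLin ρ ε f w q) x y|
        = |kernelW ρ ε f w x y| *
            |Real.exp (-(t * patchDist ρ f q x y)) - 1 - -(t * patchDist ρ f q x y)| := by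
          simp only [Pi.sub_apply, Pi.smul_apply, smul_eq_mul]
          rw [kernelW_add_mul hf hfM hw hwa hq hqa, kernelLin_eq, ← abs_mul]
          ring_nf
      _ ≤ 1 * (t * C) ^ 2 := by
          refine mul_le_mul (hκ1 x y) (h.trans ?_) (abs_nonneg _) zero_le_one
          rw [← sq_abs]
          exact pow_le_pow_left₀ (abs_nonneg _) (hs x y) 2
      _ = C ^ 2 * t ^ 2 := by ring

end Kernel

section KernelDerivative

open Metric

variable {d : ℕ} {ρ ε Wb : ℝ} {f f' w w' h h' : Rd d → ℝ}

lemma kernelW_congr (hf : f =ᵐ[volume] f') (hw : w =ᵐ[volume.restrict (closedBall 0 ρ)] w') :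
    kernelW ρ ε f w = kernelW ρ ε f' w' := by
  ext x y
  simp only [kernelW_eq_ite, patchDist_congr hf hw]

lemma kernelLin_congr (hf : f =ᵐ[volume] f') (hw : w =ᵐ[volume.restrict (closedBall 0 ρ)] w')
    (hh : h =ᵐ[volume.restrict (closedBall 0 ρ)] h') :
    kernelLin ρ ε f w h = kernelLin ρ ε f' w' h' := by
  ext x y
  simp only [kernelLin_eq, kernelW_congr hf hw, patchDist_congr hf hh]

lemma isBoundedKernel_kernelW (hf : AEStronglyMeasurable f volume) (hw : w ∈ Uad ρ Wb) :
    IsBoundedKernel (kernelW ρ ε f w) 1 := by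
  refine ⟨?_, fun x y => abs_kernelW_le_one (by filter_upwards [hw.2] with τ hτ using hτ.1)⟩
  rw [kernelW_congr hf.ae_eq_mk hw.1.1.ae_eq_mk]
  exact measurable_kernelW hf.stronglyMeasurable_mk.measurable
    hw.1.1.stronglyMeasurable_mk.measurable

theorem exists_isBoundedKernel_kernelW_sub (hWb : 0 ≤ Wb) (hf : MemLp f ⊤ volume)
    (hw : w ∈ Uad ρ Wb) (hh : h ∈ Uad ρ Wb) :
    ∃ C₁ C₂ t₀ : ℝ, 0 < t₀ ∧ ∀ t ∈ Set.Ioc 0 t₀,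
      IsBoundedKernel (kernelW ρ ε f (fun τ => w τ + t * (h τ - w τ)) - kernelW ρ ε f w)
        (C₁ * t) ∧
      IsBoundedKernel (kernelW ρ ε f (fun τ => w τ + t * (h τ - w τ)) - kernelW ρ ε f w -
        t • kernelLin ρ ε f w (fun τ => h τ - w τ)) (C₂ * t ^ 2) := by
  set M := lpNorm f ⊤ volume
  obtain ⟨f', hf'm, hf'M, hff'⟩ := exists_measurable_mem_Icc_ae_eq
    (neg_le_self (lpNorm_nonneg)) hf.1 (by
      filter_upwards [ae_le_lpNorm_exponent_top hf] with z hz using abs_le.mp hz)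
  obtain ⟨w', hw'm, hw'b, hww'⟩ := exists_measurable_mem_Icc_ae_eq hWb hw.1.1 hw.2
  obtain ⟨h', hh'm, hh'b, hhh'⟩ := exists_measurable_mem_Icc_ae_eq hWb hh.1.1 hh.2
  set C := Wb * (2 * M) ^ 2 * volume.real (closedBall (0 : Rd d) ρ)
  have hC : 0 ≤ C := mul_nonneg (mul_nonneg hWb (sq_nonneg _)) measureReal_nonneg
  have hfM : ∀ z, |f' z| ≤ M := fun z => abs_le.mpr (hf'M z)
  have hw'a : ∀ τ, |w' τ| ≤ Wb := fun τ => abs_le.mpr ⟨by linarith [(hw'b τ).1], (hw'b τ).2⟩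
  have hq'a : ∀ τ, |h' τ - w' τ| ≤ Wb := fun τ => by
    obtain ⟨hw₀, hw₁⟩ := hw'b τ
    obtain ⟨hh₀, hh₁⟩ := hh'b τ
    exact abs_sub_le_iff.mpr ⟨by linarith, by linarith⟩
  refine ⟨2 * C, C ^ 2, 1 / (C + 1), by positivity, fun t ht => ?_⟩
  have htC : t * C ≤ 1 := by
    have := (le_div_iff₀ (by positivity : (0 : ℝ) < C + 1)).mp ht.2
    nlinarith [ht.1]
  have hwt : (fun τ => w τ + t * (h τ - w τ)) =ᵐ[volume.restrict (closedBall 0 ρ)]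
      fun τ => w' τ + t * (h' τ - w' τ) := by
    filter_upwards [hww', hhh'] with τ h₁ h₂
    rw [h₁, h₂]
  have hq : (fun τ => h τ - w τ) =ᵐ[volume.restrict (closedBall 0 ρ)] fun τ => h' τ - w' τ := by
    filter_upwards [hww', hhh'] with τ h₁ h₂
    rw [h₁, h₂]
  rw [kernelW_congr hff' hwt, kernelW_congr hff' hww', kernelLin_congr hff' hww' hq]
  exact isBoundedKernel_kernelW_add_mul_sub hf'm hfM hw'm (fun τ => (hw'b τ).1) hw'a
    (hh'm.sub hw'm) hq'a (fun x y => abs_patchDist_le hfM hq'a) ht.1.le htC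

end KernelDerivative

section StateEquation

variable {d : ℕ} {A I Ω : Set (Rd d)} {μ lam c₀ c η C₁ C₂ D t : ℝ}
  {κ κ' γ : Rd d → Rd d → ℝ} {f uT u u' v p : Rd d → ℝ}

def IsState (A I Ω : Set (Rd d)) (μ lam : ℝ) (κ : Rd d → Rd d → ℝ) (f u : Rd d → ℝ) : Prop :=
  u ∈ Vc A I ∧ ∀ ψ ∈ Vc A I, μ * innerV A κ u ψ + lam * ∫ x in Ω, (u x - f x) * ψ x = 0

def IsAdjointState (A I Ω : Set (Rd d)) (μ lam : ℝ) (κ : Rd d → Rd d → ℝ)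
    (u uT p : Rd d → ℝ) : Prop :=
  p ∈ Vc A I ∧ ∀ φ ∈ Vc A I,
    μ * innerV A κ p φ + lam * ∫ x in Ω, p x * φ x = -∫ x in Ω, (u x - uT x) * φ x

lemma sub_mem_Vc (hu : u ∈ Vc A I) (hv : v ∈ Vc A I) : u - v ∈ Vc A I :=
  ⟨hu.1.sub hv.1, by filter_upwards [hu.2, hv.2] with x h₁ h₂ using by simp [h₁, h₂]⟩

variable [IsFiniteMeasure (volume.restrict A)]

lemma innerV_eq_add_innerV_sub_kernel (hu : MemLp u 2 (volume.restrict A))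
    (hv : MemLp v 2 (volume.restrict A)) (hκ : IsBoundedKernel κ c)
    (hΔ : IsBoundedKernel (κ' - κ) η) :
    innerV A κ' u v = innerV A κ u v + innerV A (κ' - κ) u v := by
  rw [← innerV_add_kernel hu hv hκ hΔ, add_sub_cancel]

lemma innerV_eq_add_innerV_sub_left (hu : MemLp u 2 (volume.restrict A))
    (hu' : MemLp u' 2 (volume.restrict A)) (hv : MemLp v 2 (volume.restrict A))
    (hκ : IsBoundedKernel κ c) :
    innerV A κ u' v = innerV A κ u v + innerV A κ (u' - u) v := by
  rw [← innerV_add_left hu (hu'.sub hu) hv hκ, add_sub_cancel]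

lemma L2norm_sub_le_of_isState (hΩA : Ω ⊆ A) (hμ : 0 < μ) (hlam : 0 ≤ lam) (hc₀ : 0 < c₀)
    (hf : MemLp f 2 (volume.restrict Ω)) (hκ : IsBoundedKernel κ c)
    (hΔ : IsBoundedKernel (κ' - κ) (C₁ * t)) (hu : IsState A I Ω μ lam κ f u)
    (hu' : IsState A I Ω μ lam κ' f u')
    (hcoer : c₀ * L2norm A (u' - u) ^ 2 ≤ innerV A κ' (u' - u) (u' - u)) :
    L2norm A (u' - u) ≤ 4 * C₁ * volume.real A * L2norm A u / c₀ * t := by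
  have hδ := sub_mem_Vc hu'.1 hu.1
  have hκ' : IsBoundedKernel κ' (c + C₁ * t) := by simpa using hκ.add hΔ
  have hsplit : innerV A κ' u' (u' - u) = innerV A κ' (u' - u) (u' - u) + innerV A κ u (u' - u) +
      innerV A (κ' - κ) u (u' - u) := by
    rw [innerV_eq_add_innerV_sub_left hu.1.1 hu'.1.1 hδ.1 hκ',
      innerV_eq_add_innerV_sub_kernel hu.1.1 hδ.1 hκ hΔ]
    ring
  have hint := integral_sub_mul_eq_add (MemLp.mono_set hΩA hu.1.1) (MemLp.mono_set hΩA hu'.1.1) hf (MemLp.mono_set hΩA hδ.1)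
  have henergy : μ * innerV A κ' (u' - u) (u' - u) + μ * innerV A (κ' - κ) u (u' - u) +
      lam * ∫ x in Ω, (u' - u) x * (u' - u) x = 0 := by
    linear_combination hu'.2 _ hδ - hu.2 _ hδ - μ * hsplit - lam * hint
  have hIδ : 0 ≤ ∫ x in Ω, (u' - u) x * (u' - u) x := integral_nonneg fun x => mul_self_nonneg _
  have hbound := neg_le_of_abs_le (abs_innerV_le hu.1.1 hδ.1 hΔ)
  have hsq : c₀ * L2norm A (u' - u) ^ 2 ≤
      4 * (C₁ * t) * volume.real A * L2norm A u * L2norm A (u' - u) := by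
    refine le_of_mul_le_mul_left ?_ hμ
    nlinarith [mul_le_mul_of_nonneg_left hcoer hμ.le, mul_le_mul_of_nonneg_left hbound hμ.le,
      mul_nonneg hlam hIδ]
  have hK : 0 ≤ 4 * (C₁ * t) * volume.real A * L2norm A u :=
    mul_nonneg (mul_nonneg (mul_nonneg (by norm_num) hΔ.nonneg) measureReal_nonneg) L2norm_nonneg
  rw [div_mul_eq_mul_div, le_div_iff₀ hc₀]
  rcases (L2norm_nonneg (s := A) (v := u' - u)).eq_or_lt with h0 | hpos
  · rw [← h0]
    linarith
  · nlinarith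

lemma integral_mul_sub_eq_innerV_of_isAdjointState (hΩA : Ω ⊆ A)
    (hf : MemLp f 2 (volume.restrict Ω)) (hκ : IsBoundedKernel κ c)
    (hΔ : IsBoundedKernel (κ' - κ) η) (hu : IsState A I Ω μ lam κ f u)
    (hu' : IsState A I Ω μ lam κ' f u') (hp : IsAdjointState A I Ω μ lam κ u uT p) :
    ∫ x in Ω, (u x - uT x) * (u' - u) x = μ * innerV A (κ' - κ) u' p := by
  have hδ := sub_mem_Vc hu'.1 hu.1
  have hκ' := innerV_eq_add_innerV_sub_kernel hu'.1.1 hp.1.1 hκ hΔ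
  have hu'u := innerV_eq_add_innerV_sub_left hu.1.1 hu'.1.1 hp.1.1 hκ
  have hint := integral_sub_mul_eq_add (MemLp.mono_set hΩA hu.1.1) (MemLp.mono_set hΩA hu'.1.1) hf (MemLp.mono_set hΩA hp.1.1)
  have hcomm : ∫ x in Ω, p x * (u' - u) x = ∫ x in Ω, (u' - u) x * p x := by
    simp only [mul_comm (p _)]
  linear_combination hp.2 _ hδ - hu'.2 _ hp.1 + hu.2 _ hp.1 + μ * hκ' + μ * hu'u + lam * hint -
    μ * innerV_comm (A := A) (κ := κ) (u := p) (v := u' - u) - lam * hcomm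

lemma zero_le_mul_innerV_add_of_loss_le (hΩA : Ω ⊆ A) (hμ : 0 ≤ μ)
    (hf : MemLp f 2 (volume.restrict Ω)) (huT : MemLp uT 2 (volume.restrict Ω))
    (hκ : IsBoundedKernel κ c) (hΔ : IsBoundedKernel (κ' - κ) (C₁ * t))
    (hR : IsBoundedKernel (κ' - κ - t • γ) (C₂ * t ^ 2))
    (hu : IsState A I Ω μ lam κ f u) (hu' : IsState A I Ω μ lam κ' f u')
    (hp : IsAdjointState A I Ω μ lam κ u uT p) (hδ : L2norm A (u' - u) ≤ D * t)
    (hmin : L2norm Ω (fun x => u x - uT x) ^ 2 ≤ L2norm Ω (fun x => u' x - uT x) ^ 2) :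
    0 ≤ t * (μ * innerV A γ u p) +
      t ^ 2 * (D ^ 2 / 2 + 4 * μ * volume.real A * L2norm A p * (C₁ * D + C₂ * L2norm A u)) := by
  have hvc := sub_mem_Vc hu'.1 hu.1
  have hloss : 0 ≤ L2norm Ω (u' - u) ^ 2 + 2 * ∫ x in Ω, (u x - uT x) * (u' - u) x := by
    have hsum : (fun x => u' x - uT x) = (u - uT) + (u' - u) := by ext x; simp
    have := L2norm_add_sq ((MemLp.mono_set hΩA hu.1.1).sub huT) (MemLp.mono_set hΩA hvc.1)
    rw [hsum] at hmin
    change L2norm Ω (u - uT) ^ 2 ≤ _ at hmin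
    simp only [Pi.sub_apply] at this ⊢
    linarith
  have hγ : IsBoundedKernel (t • γ) (C₁ * t + C₂ * t ^ 2) := by simpa using hΔ.sub hR
  have hsplit : innerV A (κ' - κ) u' p = innerV A (κ' - κ) (u' - u) p + t * innerV A γ u p +
      innerV A (κ' - κ - t • γ) u p := by
    rw [innerV_eq_add_innerV_sub_left hu.1.1 hu'.1.1 hp.1.1 hΔ, ← innerV_smul_kernel, add_assoc,
      ← innerV_add_kernel hu.1.1 hp.1.1 hγ hR, add_sub_cancel]
    ring
  have hb₁ : innerV A (κ' - κ) (u' - u) p ≤ t ^ 2 * (4 * C₁ * volume.real A * D * L2norm A p) := by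
    refine (le_abs_self _).trans ((abs_innerV_le hvc.1 hp.1.1 hΔ).trans ?_)
    have h0 : 0 ≤ 4 * (C₁ * t) * volume.real A := by
      have := hΔ.nonneg
      positivity
    exact (mul_le_mul_of_nonneg_left (mul_le_mul_of_nonneg_right hδ L2norm_nonneg) h0).trans_eq
      (by ring)
  have hb₂ : innerV A (κ' - κ - t • γ) u p ≤
      t ^ 2 * (4 * C₂ * volume.real A * L2norm A u * L2norm A p) :=
    (le_abs_self _).trans ((abs_innerV_le hu.1.1 hp.1.1 hR).trans_eq (by ring))
  have hb₃ : L2norm Ω (u' - u) ^ 2 ≤ t ^ 2 * D ^ 2 :=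
    (pow_le_pow_left₀ L2norm_nonneg ((L2norm_mono_set hΩA hvc.1).trans hδ) 2).trans_eq (by ring)
  have hadj := integral_mul_sub_eq_innerV_of_isAdjointState hΩA hf hκ hΔ hu hu' hp
  rw [hsplit] at hadj
  linarith [mul_le_mul_of_nonneg_left hb₁ hμ, mul_le_mul_of_nonneg_left hb₂ hμ]

end StateEquation

theorem stmt19_general
    {d : ℕ}
    (Ω : Set (Rd d)) (hΩb : Bornology.IsBounded Ω)
    (ε : ℝ)
    (ΩI : Set (Rd d)) (hΩI : ΩI = interDom Ω ε)
    (Ohat : Set (Rd d)) (hOhat : Ohat = Ω ∪ ΩI)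
    (ρ : ℝ) (Wb : ℝ) (hWb : 0 < Wb)
    (f : Rd d → ℝ) (hfL : MemLp f ⊤ (volume : Measure (Rd d)))
    (c₀ C₀ : ℝ) (hc₀ : 0 < c₀)
    (hequiv : ∀ w ∈ Uad (d := d) ρ Wb, ∀ v ∈ Vc Ohat ΩI,
      c₀ * L2norm Ohat v ^ 2 ≤ innerV Ohat (kernelW ρ ε f w) v v ∧
        innerV Ohat (kernelW ρ ε f w) v v ≤ C₀ * L2norm Ohat v ^ 2)
    (μ : ℝ) (hμ : 0 < μ) (lam : ℝ) (hlam : 0 < lam)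
    (uT : Rd d → ℝ) (huT : MemLp uT 2 (volume.restrict Ω))
    (usol : (Rd d → ℝ) → Rd d → ℝ)
    (husol : ∀ w' ∈ Uad (d := d) ρ Wb, usol w' ∈ Vc Ohat ΩI ∧
      ∀ ψ ∈ Vc Ohat ΩI,
        μ * innerV Ohat (kernelW ρ ε f w') (usol w') ψ +
          lam * ∫ x in Ω, (usol w' x - f x) * ψ x = 0)
    (w : Rd d → ℝ) (hw : w ∈ Uad (d := d) ρ Wb)
    (hmin : ∀ w' ∈ Uad (d := d) ρ Wb,
      1 / 2 * L2norm Ω (fun x => usol w x - uT x) ^ 2 ≤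
        1 / 2 * L2norm Ω (fun x => usol w' x - uT x) ^ 2)
    (p : Rd d → ℝ) (hp : p ∈ Vc Ohat ΩI)
    (hadj : ∀ φ ∈ Vc Ohat ΩI,
      μ * innerV Ohat (kernelW ρ ε f w) p φ + lam * ∫ x in Ω, p x * φ x =
        -∫ x in Ω, (usol w x - uT x) * φ x) :
    ∀ hdir ∈ Uad (d := d) ρ Wb,
      0 ≤ μ * innerV Ohat (kernelLin ρ ε f w (fun τ => hdir τ - w τ)) (usol w) p := by
  intro h hh
  have hΩA : Ω ⊆ Ohat := hOhat ▸ Set.subset_union_left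
  have hA : volume Ohat ≠ ⊤ := by
    rw [hOhat, hΩI]
    exact (hΩb.union (isBounded_interDom hΩb ε)).measure_lt_top.ne
  have : IsFiniteMeasure (volume.restrict Ohat) := isFiniteMeasure_restrict.mpr hA
  have : IsFiniteMeasure (volume.restrict Ω) :=
    isFiniteMeasure_restrict.mpr (measure_ne_top_of_subset hΩA hA)
  have hfΩ : MemLp f 2 (volume.restrict Ω) := (hfL.restrict Ω).mono_exponent le_top
  have hκ := isBoundedKernel_kernelW (ε := ε) hfL.1 hw
  obtain ⟨C₁, C₂, t₀, ht₀, hκt⟩ := exists_isBoundedKernel_kernelW_sub (ε := ε) hWb.le hfL hw hh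
  apply nonneg_of_forall_zero_le_mul_add_sq_mul (lt_min ht₀ one_pos)
  intro t ht
  have hwt : (fun τ => w τ + t * (h τ - w τ)) ∈ Uad ρ Wb :=
    (convex_Uad ρ Wb).add_smul_sub_mem hw hh ⟨ht.1.le, ht.2.trans (min_le_right _ _)⟩
  obtain ⟨hΔ, hR⟩ := hκt t ⟨ht.1, ht.2.trans (min_le_left _ _)⟩
  have hδ := L2norm_sub_le_of_isState hΩA hμ hlam.le hc₀ hfΩ hκ hΔ (husol w hw) (husol _ hwt)
    ((hequiv _ hwt _ (sub_mem_Vc (husol _ hwt).1 (husol w hw).1)).1)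
  exact zero_le_mul_innerV_add_of_loss_le hΩA hμ.le hfΩ huT hκ hΔ hR (husol w hw) (husol _ hwt)
    ⟨hp, hadj⟩ hδ (by linarith [hmin _ hwt])

/-- First-order variational inequality at an optimal weight `w` of the bilevel problem. -/
theorem stmt19
    {d : ℕ} (hd : 1 ≤ d)
    (Ω : Set (Rd d)) (hΩm : MeasurableSet Ω) (hΩb : Bornology.IsBounded Ω)
    (ε : ℝ) (hε : 0 < ε)
    (ΩI : Set (Rd d)) (hΩI : ΩI = interDom Ω ε)
    (Ohat : Set (Rd d)) (hOhat : Ohat = Ω ∪ ΩI)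
    (ρ : ℝ) (hρ : 0 < ρ) (Wb : ℝ) (hWb : 0 < Wb)
    (f : Rd d → ℝ) (hfL : MemLp f ⊤ (volume : Measure (Rd d)))
    (hf0 : ∀ᵐ x : Rd d ∂volume, x ∉ Ohat → f x = 0)
    (c₀ C₀ : ℝ) (hc₀ : 0 < c₀) (hc₀C₀ : c₀ ≤ C₀)
    (hequiv : ∀ w ∈ Uad (d := d) ρ Wb, ∀ v ∈ Vc Ohat ΩI,
      c₀ * L2norm Ohat v ^ 2 ≤ innerV Ohat (kernelW ρ ε f w) v v ∧
        innerV Ohat (kernelW ρ ε f w) v v ≤ C₀ * L2norm Ohat v ^ 2)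
    (μ : ℝ) (hμ : 0 < μ) (lam : ℝ) (hlam : 0 < lam)
    (uT : Rd d → ℝ) (huT : MemLp uT 2 (volume.restrict Ω))
    (usol : (Rd d → ℝ) → Rd d → ℝ)
    (husol : ∀ w' ∈ Uad (d := d) ρ Wb, usol w' ∈ Vc Ohat ΩI ∧
      ∀ ψ ∈ Vc Ohat ΩI,
        μ * innerV Ohat (kernelW ρ ε f w') (usol w') ψ +
          lam * ∫ x in Ω, (usol w' x - f x) * ψ x = 0)
    (w : Rd d → ℝ) (hw : w ∈ Uad (d := d) ρ Wb)
    (hmin : ∀ w' ∈ Uad (d := d) ρ Wb,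
      1 / 2 * L2norm Ω (fun x => usol w x - uT x) ^ 2 ≤
        1 / 2 * L2norm Ω (fun x => usol w' x - uT x) ^ 2)
    (p : Rd d → ℝ) (hp : p ∈ Vc Ohat ΩI)
    (hadj : ∀ φ ∈ Vc Ohat ΩI,
      μ * innerV Ohat (kernelW ρ ε f w) p φ + lam * ∫ x in Ω, p x * φ x =
        -∫ x in Ω, (usol w x - uT x) * φ x) :
    ∀ hdir ∈ Uad (d := d) ρ Wb,
      0 ≤ μ * innerV Ohat (kernelLin ρ ε f w (fun τ => hdir τ - w τ)) (usol w) p :=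
  stmt19_general Ω hΩb ε ΩI hΩI Ohat hOhat ρ Wb hWb f hfL c₀ C₀ hc₀ hequiv μ hμ lam hlam uT huT usol
    husol w hw hmin p hp hadj
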